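/- arXiv:1208.2442 — 2 statements merged into one kernel-verified Lean document; each statement's English description precedes it below -/
import Mathlib

section
/- In R = (Z/4Z)⟨x,y⟩ with the left graded-lexicographic order (x > y), the set G = {3xyx − 2xy, −2xy²x} is a noncommutative Gröbner basis for the two-sided ideal I = ⟨3xyx − 2xy⟩; in particular −2xy²x ∈ I and ⟨LT(G)⟩ = ⟨LT(I)⟩. -/
open MonoidAlgebra

/-- The monoid of noncommutative monomials (words) in `m` variables. -/
abbrev Mon (m : ℕ) := FreeMonoid (Fin m)

/-- An order on monomials is admissible if it is a well-order compatible with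
multiplication on both sides, and every word is greater than its proper nonempty subwords. -/
def AdmissibleOrder (m : ℕ) [LinearOrder (Mon m)] : Prop :=
  WellFoundedLT (Mon m) ∧
  (∀ p q r : Mon m, r ≠ 1 → p < q → p * r < q * r) ∧
  (∀ p q s : Mon m, s ≠ 1 → p < q → s * p < s * q) ∧
  (∀ p q r : Mon m, q ≠ 1 → r ≠ 1 → p = q * r → q < p ∧ r < p)

variable {m : ℕ} {V : Type} [CommRing V] [LinearOrder (Mon m)]

/-- Leading monomial of `f` (junk value `1` for `f = 0`). -/
noncomputable def lmOf (f : MonoidAlgebra V (Mon m)) : Mon m := WithBot.unbotD 1 f.coeff.support.max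

/-- Leading coefficient. -/
noncomputable def lcOf (f : MonoidAlgebra V (Mon m)) : V := f.coeff (lmOf f)

/-- Leading term, as an element of the free algebra. -/
noncomputable def ltOf (f : MonoidAlgebra V (Mon m)) : MonoidAlgebra V (Mon m) :=
  MonoidAlgebra.single (lmOf f) (lcOf f)

/-- `LM(E)`: leading monomials of the nonzero elements of `E`. -/
def lmSet (E : Set (MonoidAlgebra V (Mon m))) : Set (Mon m) :=
  {p | ∃ f ∈ E, f ≠ 0 ∧ lmOf f = p}

/-- `LT(E)`: leading terms of the nonzero elements of `E`. -/
def ltSet (E : Set (MonoidAlgebra V (Mon m))) : Set (MonoidAlgebra V (Mon m)) :=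
  {t | ∃ f ∈ E, f ≠ 0 ∧ t = ltOf f}

/-- `V·LM(E)`: terms whose monomial is a leading monomial of `E`. -/
def vlm (E : Set (MonoidAlgebra V (Mon m))) : Set (MonoidAlgebra V (Mon m)) :=
  {t | ∃ a : V, ∃ p ∈ lmSet E, t = MonoidAlgebra.single p a}

/-- `V·LT(E)`: `V`-multiples of leading terms of nonzero elements of `E`. -/
def vlt (E : Set (MonoidAlgebra V (Mon m))) : Set (MonoidAlgebra V (Mon m)) :=
  {t | ∃ c : V, ∃ f ∈ E, f ≠ 0 ∧ t = c • ltOf f}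

/-- The `V`-span `⟨⟨V·LM(E) \ V·LT(E)⟩⟩`. -/
noncomputable def modB (E : Set (MonoidAlgebra V (Mon m))) :
    Submodule V (MonoidAlgebra V (Mon m)) :=
  Submodule.span V (vlm E \ vlt E)

/-- The `V`-span `⟨⟨NonLM(E)⟩⟩` of monomials that are not leading monomials of `E`. -/
noncomputable def modC (E : Set (MonoidAlgebra V (Mon m))) :
    Submodule V (MonoidAlgebra V (Mon m)) :=
  Submodule.span V {t | ∃ p ∉ lmSet E, t = MonoidAlgebra.single p (1 : V)}

/-- The term `a·p` divides the term `b·q`. -/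
def termDvd (a : V) (p : Mon m) (b : V) (q : Mon m) : Prop :=
  a ∣ b ∧ ∃ u v : Mon m, q = u * p * v

/-- `r` is a remainder of the division of `f` by `G`. -/
def IsRemainder (G : Set (MonoidAlgebra V (Mon m))) (f r : MonoidAlgebra V (Mon m)) : Prop :=
  (∃ n : ℕ, ∃ u v g : Fin n → MonoidAlgebra V (Mon m), (∀ i, g i ∈ G) ∧
      f = (∑ i, u i * g i * v i) + r ∧
      ∀ i, u i * g i * v i = 0 ∨ lmOf (u i * g i * v i) ≤ lmOf f) ∧
  ∀ g ∈ G, g ≠ 0 → ∀ p ∈ r.coeff.support, ¬ termDvd (lcOf g) (lmOf g) (r.coeff p) p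

/-- `O` is an overlap relation of `f` and `g` by `p` and `q`. -/
def IsOverlap (f g : MonoidAlgebra V (Mon m)) (p q : Mon m)
    (O : MonoidAlgebra V (Mon m)) : Prop :=
  (∃ c : V, lcOf g = lcOf f * c ∧
      O = (c • f) * MonoidAlgebra.single p 1 - MonoidAlgebra.single q 1 * g) ∨
  (∃ c : V, lcOf f = lcOf g * c ∧
      O = f * MonoidAlgebra.single p 1 - MonoidAlgebra.single q c * g)

/-- The left graded lexicographic linear order on words: compare first by length, then
lexicographically from the left.  With letters `y = of 0 < x = of 1` this is the grlex
order with `x > y`. -/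
noncomputable def grlexLO (m : ℕ) : LinearOrder (Mon m) :=
  LinearOrder.lift' (fun p : Mon m => toLex (p.toList.length, p.toList))
    (fun p q h => FreeMonoid.toList.injective (congrArg (fun z => (ofLex z).2) h))

attribute [local instance] grlexLO


namespace GBZmod4

/-! ### A one-step rewriting function on words over `Fin 2` (`x = 1`, `y = 0`):
replace the leftmost occurrence of `xyx = [1,0,1]` by `xy = [1,0]`. -/

def red1 : List (Fin 2) → Option (List (Fin 2))
  | a :: b :: c :: t =>
    if a = 1 ∧ b = 0 ∧ c = 1 then some (1 :: 0 :: t)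
    else (red1 (b :: c :: t)).map (a :: ·)
  | _ => none

lemma red1_isSome : ∀ (u v : List (Fin 2)), (red1 (u ++ [1,0,1] ++ v)).isSome := by
  intro u
  induction u with
  | nil => intro v; simp [red1]
  | cons a u ih =>
    intro v
    have h3 : ∃ b c t, u ++ [1,0,1] ++ v = b :: c :: t := by
      rcases u with _ | ⟨b, _ | ⟨c, u''⟩⟩ <;> exact ⟨_, _, _, rfl⟩
    obtain ⟨b, c, t, h⟩ := h3
    have : a :: u ++ [1,0,1] ++ v = a :: b :: c :: t := by simp [← h]
    rw [this, red1]
    split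
    · simp
    · have := ih v
      rw [h] at this
      simpa using this

lemma red1_dec : ∀ {w r : List (Fin 2)}, red1 w = some r →
    ∃ u v, w = u ++ [1,0,1] ++ v ∧ r = u ++ [1,0] ++ v := by
  intro w
  induction w with
  | nil => intro r h; simp [red1] at h
  | cons a t ih =>
    intro r h
    rcases t with _ | ⟨b, t'⟩
    · simp [red1] at h
    rcases t' with _ | ⟨c, t''⟩
    · simp [red1] at h
    rw [red1] at h
    split at h
    · rename_i hc
      obtain ⟨ha, hb, hcc⟩ := hc
      subst ha hb hcc
      refine ⟨[], t'', by simp, ?_⟩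
      simp at h
      simp [← h]
    · rcases Option.map_eq_some_iff.mp h with ⟨r', hr', rfl⟩
      obtain ⟨u, v, hw, hr⟩ := ih hr'
      exact ⟨a :: u, v, by simp [hw], by simp [hr]⟩

lemma red1_of_infix {w : List (Fin 2)} (h : [1,0,1] <:+: w) : ∃ r, red1 w = some r := by
  obtain ⟨s, t, rfl⟩ := h
  exact Option.isSome_iff_exists.mp (by simpa using red1_isSome s t)

lemma red1_eq_none {w : List (Fin 2)} (h : ¬ [1,0,1] <:+: w) : red1 w = none := by
  cases hw : red1 w with
  | none => rfl
  | some r =>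
    obtain ⟨u, v, rfl, -⟩ := red1_dec hw
    exact absurd ⟨u, v, by simp⟩ h

lemma red1_length {w r : List (Fin 2)} (h : red1 w = some r) : r.length + 1 = w.length := by
  obtain ⟨u, v, rfl, rfl⟩ := red1_dec h
  simp
  omega

/-! ### The truncated normal-form map -/

abbrev Rg := MonoidAlgebra (ZMod 4) (Mon 2)

noncomputable def nuL (w : List (Fin 2)) : Rg :=
  match red1 w with
  | none => MonoidAlgebra.single (FreeMonoid.ofList w) 1
  | some r =>
    match red1 r with
    | none => MonoidAlgebra.single (FreeMonoid.ofList r) 2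
    | some _ => 0

def Sgen : Set Rg :=
  {h | ∃ w : List (Fin 2), [1,0,0,1] <:+: w ∧ h = MonoidAlgebra.single (FreeMonoid.ofList w) 2}

noncomputable def Smod : Submodule (ZMod 4) Rg := Submodule.span (ZMod 4) Sgen

noncomputable def nuM (w : List (Fin 2)) : Rg ⧸ Smod := Submodule.Quotient.mk (nuL w)

lemma nuL_of_none {w : List (Fin 2)} (h : red1 w = none) :
    nuL w = MonoidAlgebra.single (FreeMonoid.ofList w) 1 := by
  simp [nuL, h]

lemma nuL_some_none {w r : List (Fin 2)} (h : red1 w = some r) (h1 : red1 r = none) :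
    nuL w = MonoidAlgebra.single (FreeMonoid.ofList r) 2 := by
  simp [nuL, h, h1]

lemma nuL_some_some {w r r' : List (Fin 2)} (h : red1 w = some r) (h1 : red1 r = some r') :
    nuL w = 0 := by
  simp [nuL, h, h1]

lemma mk_single2_eq_zero {w : List (Fin 2)} (h : [1,0,0,1] <:+: w) :
    (Submodule.Quotient.mk (MonoidAlgebra.single (FreeMonoid.ofList w) 2) : Rg ⧸ Smod) = 0 :=
  (Submodule.Quotient.mk_eq_zero _).2 (Submodule.subset_span ⟨w, h, rfl⟩)

lemma two_smul_single2 (a : Mon 2) :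
    (2 : ZMod 4) • (MonoidAlgebra.single a 2 : Rg) = 0 := by
  rw [MonoidAlgebra.smul_single', show ((2:ZMod 4) * 2) = 0 from by decide]
  exact MonoidAlgebra.single_zero a

lemma K2 {w r : List (Fin 2)} (h : red1 w = some r) : (2 : ZMod 4) • nuM w = 0 := by
  cases h1 : red1 r with
  | none =>
    rw [nuM, nuL_some_none h h1, ← Submodule.Quotient.mk_smul, two_smul_single2]
    rfl
  | some r' => rw [nuM, nuL_some_some h h1]; simp

lemma K3 {w r r' : List (Fin 2)} (h : red1 w = some r) (h1 : red1 r = some r') : nuM w = 0 := by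
  rw [nuM, nuL_some_some h h1]; rfl

lemma K4 {w r : List (Fin 2)} (h : red1 w = some r) (hi : [1,0,0,1] <:+: r) : nuM w = 0 := by
  cases h1 : red1 r with
  | none => rw [nuM, nuL_some_none h h1, mk_single2_eq_zero hi]
  | some r' => exact K3 h h1

lemma K6 {w : List (Fin 2)} (hi : [1,0,0,1] <:+: w) : (2 : ZMod 4) • nuM w = 0 := by
  cases h : red1 w with
  | none =>
    rw [nuM, nuL_of_none h, ← Submodule.Quotient.mk_smul, MonoidAlgebra.smul_single',
      show ((2:ZMod 4) * 1) = 2 from by decide]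
    exact mk_single2_eq_zero hi
  | some r => exact K2 h

/-- Confluence of the rewriting system, in truncated-normal-form terms. -/
lemma main_conf (u v : List (Fin 2)) :
    nuM (u ++ [1,0,1] ++ v) = (2 : ZMod 4) • nuM (u ++ [1,0] ++ v) := by
  obtain ⟨r₀, hr₀⟩ := red1_of_infix (⟨u, v, rfl⟩ : [1,0,1] <:+: (u ++ [1,0,1] ++ v))
  obtain ⟨u₀, v₀, hw, hr⟩ := red1_dec hr₀
  rw [List.append_assoc, List.append_assoc] at hw
  rcases List.append_eq_append_iff.mp hw with ⟨t, htu, htv⟩ | ⟨t, htu, htv⟩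
  · rcases t with _ | ⟨a, _ | ⟨b, _ | ⟨c, t'⟩⟩⟩
    · simp only [List.append_nil] at htu
      obtain rfl := htu
      have hv : v = v₀ := by simpa using htv
      subst hv
      cases h1 : red1 r₀ with
      | none =>
        rw [nuM, nuL_some_none hr₀ h1, hr, nuM, nuL_of_none (hr ▸ h1),
          ← Submodule.Quotient.mk_smul, MonoidAlgebra.smul_single',
          show ((2:ZMod 4) * 1) = 2 from by decide]
      | some r' =>
        rw [K3 hr₀ h1, ← hr]
        exact (K2 h1).symm
    · exfalso
      simp only [List.cons_append, List.nil_append, List.cons.injEq] at htv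
      exact absurd htv.2.1.symm (by decide)
    · simp only [List.cons_append, List.nil_append, List.cons.injEq] at htv
      obtain ⟨ha, hb, -, hv⟩ := htv
      subst htu
      obtain rfl : v = 0 :: 1 :: v₀ := hv
      have hinf : [1,0,1] <:+: r₀ := ⟨u, 0 :: v₀, by simp [hr, ← ha, ← hb]⟩
      obtain ⟨r', h1⟩ := red1_of_infix hinf
      rw [K3 hr₀ h1]
      exact (K6 (⟨u, v₀, by simp⟩ : [1,0,0,1] <:+: (u ++ [1,0] ++ (0 :: 1 :: v₀)))).symm
    · simp only [List.cons_append, List.nil_append, List.cons.injEq] at htv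
      obtain ⟨ha, hb, hc, hv⟩ := htv
      subst htu
      obtain rfl : v = t' ++ ([1,0,1] ++ v₀) := hv
      have hinf : [1,0,1] <:+: r₀ := ⟨u, t' ++ [1,0] ++ v₀, by simp [hr, ← ha, ← hb, ← hc]⟩
      obtain ⟨r', h1⟩ := red1_of_infix hinf
      rw [K3 hr₀ h1]
      obtain ⟨r'', h2⟩ := red1_of_infix
        (⟨u ++ [1,0] ++ t', v₀, by simp⟩ :
          [1,0,1] <:+: (u ++ [1,0] ++ (t' ++ ([1,0,1] ++ v₀))))
      exact (K2 h2).symm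
  · rcases t with _ | ⟨a, _ | ⟨b, _ | ⟨c, t'⟩⟩⟩
    · simp only [List.append_nil] at htu
      obtain rfl := htu
      have hv : v₀ = v := by simpa using htv
      subst hv
      cases h1 : red1 r₀ with
      | none =>
        rw [nuM, nuL_some_none hr₀ h1, hr, nuM, nuL_of_none (hr ▸ h1),
          ← Submodule.Quotient.mk_smul, MonoidAlgebra.smul_single',
          show ((2:ZMod 4) * 1) = 2 from by decide]
      | some r' =>
        rw [K3 hr₀ h1, ← hr]
        exact (K2 h1).symm
    · exfalso
      simp only [List.cons_append, List.nil_append, List.cons.injEq] at htv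
      exact absurd htv.2.1.symm (by decide)
    · simp only [List.cons_append, List.nil_append, List.cons.injEq] at htv
      obtain ⟨ha, hb, -, hv⟩ := htv
      subst htu
      obtain rfl : v₀ = 0 :: 1 :: v := hv
      rw [K4 hr₀ (⟨u₀, v, by simp [hr]⟩ : [1,0,0,1] <:+: r₀)]
      obtain ⟨r', h1⟩ := red1_of_infix
        (⟨u₀, 0 :: v, by simp [← ha, ← hb]⟩ :
          [1,0,1] <:+: (u₀ ++ [a, b] ++ [1,0] ++ v))
      exact (K2 h1).symm
    · simp only [List.cons_append, List.nil_append, List.cons.injEq] at htv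
      obtain ⟨ha, hb, hc, hv⟩ := htv
      subst htu
      obtain rfl : v₀ = t' ++ ([1,0,1] ++ v) := hv
      have hinf : [1,0,1] <:+: r₀ := ⟨u₀ ++ [1,0] ++ t', v, by simp [hr]⟩
      obtain ⟨r', h1⟩ := red1_of_infix hinf
      rw [K3 hr₀ h1]
      obtain ⟨r'', h2⟩ := red1_of_infix
        (⟨u₀, t' ++ [1,0] ++ v, by simp [← ha, ← hb, ← hc]⟩ :
          [1,0,1] <:+: (u₀ ++ (a :: b :: c :: t') ++ [1,0] ++ v))
      exact (K2 h2).symm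

/-! ### The generator, the expected Gröbner basis, and the linear map `N` -/

def xm : Mon 2 := FreeMonoid.of 1
def ym : Mon 2 := FreeMonoid.of 0

noncomputable def fp : Rg :=
  MonoidAlgebra.single (xm * ym * xm) 3 - MonoidAlgebra.single (xm * ym) 2

noncomputable def gp : Rg := MonoidAlgebra.single (xm * ym * ym * xm) (-2)

noncomputable def NR : Rg →ₗ[ZMod 4] Rg :=
  Finsupp.linearCombination (ZMod 4) (fun p : Mon 2 => nuL p.toList) ∘ₗ
    (MonoidAlgebra.coeffLinearEquiv (ZMod 4)).toLinearMap

noncomputable def NM : Rg →ₗ[ZMod 4] (Rg ⧸ Smod) := Smod.mkQ.comp NR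

lemma NR_single (p : Mon 2) (c : ZMod 4) :
    NR (MonoidAlgebra.single p c) = c • nuL p.toList :=
  by rw [NR, LinearMap.comp_apply]; exact Finsupp.linearCombination_single (ZMod 4) c p

lemma NR_apply (h : Rg) : NR h = Finsupp.sum h.coeff fun w c => c • nuL w.toList :=
  Finsupp.linearCombination_apply (ZMod 4) h.coeff

lemma NM_single (p : Mon 2) (c : ZMod 4) : NM (MonoidAlgebra.single p c) = c • nuM p.toList := by
  rw [NM, LinearMap.comp_apply, NR_single, map_smul]
  rfl

lemma prod_expand (u v : Mon 2) :
    MonoidAlgebra.single u (1 : ZMod 4) * fp * MonoidAlgebra.single v 1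
      = MonoidAlgebra.single (u * (xm * ym * xm) * v) 3
        - MonoidAlgebra.single (u * (xm * ym) * v) 2 := by
  simp [fp, mul_sub, sub_mul, MonoidAlgebra.single_mul_single, mul_assoc]

lemma toList_conc3 (u v : Mon 2) :
    (u * (xm * ym * xm) * v).toList = u.toList ++ [1,0,1] ++ v.toList := by
  simp [xm, ym]

lemma toList_conc2 (u v : Mon 2) :
    (u * (xm * ym) * v).toList = u.toList ++ [1,0] ++ v.toList := by
  simp [xm, ym]

lemma NM_mul_f (u v : Mon 2) :
    NM (MonoidAlgebra.single u 1 * fp * MonoidAlgebra.single v 1) = 0 := by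
  rw [prod_expand, map_sub, NM_single, NM_single, toList_conc3, toList_conc2, main_conf,
    smul_smul, show ((3:ZMod 4) * 2) = 2 from by decide, sub_self]

/-! ### The span of `{u f v}` is a two-sided ideal killed by `N` -/

def Pgen : Set Rg :=
  {h | ∃ u v : Mon 2, h = MonoidAlgebra.single u 1 * fp * MonoidAlgebra.single v 1}

noncomputable def Pmod : Submodule (ZMod 4) Rg := Submodule.span (ZMod 4) Pgen

lemma mul_gen_left (r : Rg) {h : Rg} (hh : h ∈ Pgen) : r * h ∈ Pmod := by
  obtain ⟨u, v, rfl⟩ := hh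
  induction r using MonoidAlgebra.induction_linear with
  | zero => rw [zero_mul]; exact Pmod.zero_mem
  | add f g hf hg => rw [add_mul]; exact Pmod.add_mem hf hg
  | single w c =>
    have he : (MonoidAlgebra.single w c : Rg)
        * (MonoidAlgebra.single u 1 * fp * MonoidAlgebra.single v 1)
        = c • (MonoidAlgebra.single (w * u) 1 * fp * MonoidAlgebra.single v 1) := by
      simp only [← mul_assoc, MonoidAlgebra.single_mul_single, mul_one]
      rw [show (MonoidAlgebra.single (w * u) c : Rg)
          = c • MonoidAlgebra.single (w * u) 1 from by rw [MonoidAlgebra.smul_single', mul_one],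
        smul_mul_assoc, smul_mul_assoc]
    rw [he]
    exact Pmod.smul_mem _ (Submodule.subset_span ⟨w * u, v, rfl⟩)

lemma mul_gen_right (r : Rg) {h : Rg} (hh : h ∈ Pgen) : h * r ∈ Pmod := by
  obtain ⟨u, v, rfl⟩ := hh
  induction r using MonoidAlgebra.induction_linear with
  | zero => rw [mul_zero]; exact Pmod.zero_mem
  | add f g hf hg => rw [mul_add]; exact Pmod.add_mem hf hg
  | single w c =>
    have he : (MonoidAlgebra.single u 1 * fp * MonoidAlgebra.single v 1 : Rg)
        * MonoidAlgebra.single w c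
        = c • (MonoidAlgebra.single u 1 * fp * MonoidAlgebra.single (v * w) 1) := by
      simp only [mul_assoc, MonoidAlgebra.single_mul_single, one_mul]
      rw [show (MonoidAlgebra.single (v * w) c : Rg)
          = c • MonoidAlgebra.single (v * w) 1 from by rw [MonoidAlgebra.smul_single', mul_one],
        mul_smul_comm, mul_smul_comm]
    rw [he]
    exact Pmod.smul_mem _ (Submodule.subset_span ⟨u, v * w, rfl⟩)

lemma Pmod_mul_left (r : Rg) {h : Rg} (hh : h ∈ Pmod) : r * h ∈ Pmod := by
  have hmap : r * h ∈ Submodule.map (LinearMap.mulLeft (ZMod 4) r) Pmod :=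
    Submodule.mem_map_of_mem hh
  rw [Pmod, Submodule.map_span] at hmap
  refine Submodule.span_le.mpr ?_ hmap
  rintro _ ⟨h', hh', rfl⟩
  simpa using mul_gen_left r hh'

lemma Pmod_mul_right (r : Rg) {h : Rg} (hh : h ∈ Pmod) : h * r ∈ Pmod := by
  have hmap : h * r ∈ Submodule.map (LinearMap.mulRight (ZMod 4) r) Pmod :=
    Submodule.mem_map_of_mem hh
  rw [Pmod, Submodule.map_span] at hmap
  refine Submodule.span_le.mpr ?_ hmap
  rintro _ ⟨h', hh', rfl⟩
  simpa using mul_gen_right r hh'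

noncomputable def Pideal : TwoSidedIdeal Rg :=
  TwoSidedIdeal.mk' Pmod Pmod.zero_mem (fun ha hb => Pmod.add_mem ha hb)
    (fun ha => Pmod.neg_mem ha) (fun hb => Pmod_mul_left _ hb) (fun ha => Pmod_mul_right _ ha)

lemma fp_mem_Pgen : fp ∈ Pgen := by
  refine ⟨1, 1, ?_⟩
  rw [← MonoidAlgebra.one_def, one_mul, mul_one]

lemma mem_Pmod_of_mem_span {h : Rg} (hh : h ∈ TwoSidedIdeal.span {fp}) : h ∈ Pmod := by
  have h1 : h ∈ Pideal := by
    refine TwoSidedIdeal.mem_span_iff.mp hh Pideal ?_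
    rintro z hz
    obtain rfl : z = fp := hz
    rw [SetLike.mem_coe, Pideal, TwoSidedIdeal.mem_mk']
    exact Submodule.subset_span fp_mem_Pgen
  rwa [Pideal, TwoSidedIdeal.mem_mk'] at h1

lemma NM_vanish {h : Rg} (hh : h ∈ Pmod) : NM h = 0 := by
  have hle : Pmod ≤ LinearMap.ker NM := by
    refine Submodule.span_le.mpr ?_
    rintro _ ⟨u, v, rfl⟩
    exact LinearMap.mem_ker.mpr (NM_mul_f u v)
  exact LinearMap.mem_ker.mp (hle hh)

/-! ### The coefficient-constraint submodule `T` -/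

noncomputable def Tmod : Submodule (ZMod 4) Rg where
  carrier := {h | ∀ p : Mon 2, h.coeff p ≠ 0 → ([1,0,0,1] <:+: p.toList ∧ h.coeff p = 2)}
  add_mem' := by
    intro a b ha hb
    intro p hp
    have hav : a.coeff p = 0 ∨ a.coeff p = 2 := by
      by_cases h : a.coeff p = 0
      · exact Or.inl h
      · exact Or.inr (ha p h).2
    have hbv : b.coeff p = 0 ∨ b.coeff p = 2 := by
      by_cases h : b.coeff p = 0
      · exact Or.inl h
      · exact Or.inr (hb p h).2
    rw [MonoidAlgebra.coeff_add, Finsupp.add_apply] at hp ⊢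
    constructor
    · by_cases h : a.coeff p = 0
      · exact (hb p (by intro hb0; rw [h, hb0] at hp; simp at hp)).1
      · exact (ha p h).1
    · have key : ∀ s t : ZMod 4, s = 0 ∨ s = 2 → t = 0 ∨ t = 2 → s + t ≠ 0 → s + t = 2 := by
        decide
      exact key _ _ hav hbv hp
  zero_mem' := by intro p hp; simp at hp
  smul_mem' := by
    intro c a ha
    intro p hp
    rw [MonoidAlgebra.coeff_smul, Finsupp.smul_apply, smul_eq_mul] at hp ⊢
    have hs : a.coeff p ≠ 0 := by
      intro h0
      rw [h0, mul_zero] at hp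
      exact hp rfl
    refine ⟨(ha p hs).1, ?_⟩
    have h2 : a.coeff p = 2 := (ha p hs).2
    rw [h2] at hp ⊢
    have key : ∀ c' : ZMod 4, c' * 2 ≠ 0 → c' * 2 = 2 := by decide
    exact key c hp
  
lemma mem_Tmod {h : Rg} (hh : h ∈ Tmod) :
    ∀ p : Mon 2, h.coeff p ≠ 0 → ([1,0,0,1] <:+: p.toList ∧ h.coeff p = 2) := hh

lemma mem_Tmod_of (h : Rg)
    (hh : ∀ p : Mon 2, h.coeff p ≠ 0 → ([1,0,0,1] <:+: p.toList ∧ h.coeff p = 2)) : h ∈ Tmod := hh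

lemma Smod_le_Tmod : Smod ≤ Tmod := by
  refine Submodule.span_le.mpr ?_
  rintro _ ⟨w, hw, rfl⟩
  refine mem_Tmod_of _ ?_
  intro p hp
  rw [MonoidAlgebra.coeff_single, Finsupp.single_apply] at hp ⊢
  by_cases h : FreeMonoid.ofList w = p
  · rw [if_pos h]
    refine ⟨?_, rfl⟩
    rw [← h]
    exact hw
  · rw [if_neg h] at hp
    exact absurd rfl hp

/-! ### Facts about the graded lexicographic order -/

lemma mon_lt_iff {p q : Mon 2} :
    p < q ↔ toLex (p.toList.length, p.toList) < toLex (q.toList.length, q.toList) := Iff.rfl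

lemma lt_of_length_lt {p q : Mon 2} (h : p.toList.length < q.toList.length) : p < q :=
  mon_lt_iff.mpr (Prod.Lex.lt_iff.mpr (Or.inl h))

lemma length_le_of_lt {p q : Mon 2} (h : p < q) : p.toList.length ≤ q.toList.length := by
  rcases Prod.Lex.lt_iff.mp (mon_lt_iff.mp h) with h1 | ⟨h1, -⟩
  · exact le_of_lt h1
  · exact le_of_eq h1

/-! ### Leading monomials -/

lemma lm_spec {h : Rg} (h0 : h ≠ 0) :
    lmOf h ∈ h.coeff.support ∧ ∀ w ∈ h.coeff.support, w ≤ lmOf h := by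
  have hne : h.coeff.support.Nonempty :=
    Finsupp.support_nonempty_iff.mpr (mt MonoidAlgebra.coeff_eq_zero.mp h0)
  obtain ⟨p, hp⟩ := Finset.max_of_nonempty hne
  have hl : lmOf h = p := by rw [lmOf, hp]; rfl
  constructor
  · rw [hl]; exact Finset.mem_of_max hp
  · intro w hw
    rw [hl]
    have hle := Finset.le_max hw
    rw [hp] at hle
    exact WithBot.coe_le_coe.mp hle

lemma lm_eq {h : Rg} {p : Mon 2} (hp : h.coeff p ≠ 0)
    (hmax : ∀ w ∈ h.coeff.support, w ≤ p) : lmOf h = p := by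
  have h1 : h.coeff.support.max = (p : WithBot (Mon 2)) :=
    le_antisymm (Finset.max_le fun a ha => WithBot.coe_le_coe.mpr (hmax a ha))
      (Finset.le_max (Finsupp.mem_support_iff.mpr hp))
  rw [lmOf, h1]
  rfl

lemma word_ne {p q : Mon 2} (h : p.toList ≠ q.toList) : p ≠ q := fun hq => h (by rw [hq])

lemma fp_apply_xyx : fp.coeff (xm * ym * xm) = 3 := by
  rw [fp, MonoidAlgebra.coeff_sub, MonoidAlgebra.coeff_single, MonoidAlgebra.coeff_single,
    Finsupp.sub_apply, Finsupp.single_eq_same,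
    Finsupp.single_eq_of_ne' (word_ne (by simp [xm, ym] : (xm*ym).toList ≠ (xm*ym*xm).toList)),
    sub_zero]

lemma fp_ne : fp ≠ 0 := by
  intro h
  have h2 := fp_apply_xyx
  rw [h, MonoidAlgebra.coeff_zero, Finsupp.coe_zero, Pi.zero_apply] at h2
  exact absurd h2 (by decide)

lemma gp_ne : gp ≠ 0 := by
  intro h
  have h2 : gp.coeff (xm * ym * ym * xm) = -2 := Finsupp.single_eq_same
  rw [h, MonoidAlgebra.coeff_zero, Finsupp.coe_zero, Pi.zero_apply] at h2
  exact absurd h2 (by decide)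

lemma lm_fp : lmOf fp = xm * ym * xm := by
  refine lm_eq (by rw [fp_apply_xyx]; decide) ?_
  intro w hw
  rw [Finsupp.mem_support_iff] at hw
  by_cases h1 : w = xm * ym * xm
  · exact le_of_eq h1
  · have h2 : w = xm * ym := by
      by_contra h2
      apply hw
      rw [fp, MonoidAlgebra.coeff_sub, MonoidAlgebra.coeff_single, MonoidAlgebra.coeff_single,
        Finsupp.sub_apply,
        Finsupp.single_eq_of_ne' (fun hh => h1 hh.symm),
        Finsupp.single_eq_of_ne' (fun hh => h2 hh.symm), sub_zero]
    rw [h2]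
    exact le_of_lt (lt_of_length_lt (by simp [xm, ym]))

lemma lc_fp : lcOf fp = 3 := by rw [lcOf, lm_fp, fp_apply_xyx]

lemma lt_fp : ltOf fp = MonoidAlgebra.single (xm * ym * xm) 3 := by
  rw [ltOf, lm_fp, lc_fp]

lemma lm_gp : lmOf gp = xm * ym * ym * xm := by
  refine lm_eq (by rw [gp, MonoidAlgebra.coeff_single, Finsupp.single_eq_same]; decide) ?_
  intro w hw
  rw [Finsupp.mem_support_iff] at hw
  by_cases h1 : w = xm * ym * ym * xm
  · exact le_of_eq h1
  · exact absurd (by rw [gp, MonoidAlgebra.coeff_single, Finsupp.single_eq_of_ne' (fun hh => h1 hh.symm)]) hw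

lemma lt_gp : ltOf gp = gp := by
  rw [ltOf, lm_gp, lcOf, lm_gp, gp, MonoidAlgebra.coeff_single, Finsupp.single_eq_same]

/-! ### `N` detects the leading coefficient of elements with irreducible leading monomial -/

lemma NR_apply_lm {h : Rg} (h0 : h ≠ 0) (hred : red1 (lmOf h).toList = none) :
    (NR h).coeff (lmOf h) = lcOf h := by
  obtain ⟨hmem, hmax⟩ := lm_spec h0
  rw [NR_apply, Finsupp.sum, MonoidAlgebra.coeff_sum, Finset.sum_apply']
  rw [Finset.sum_eq_single (lmOf h)]
  · rw [nuL_of_none hred, FreeMonoid.ofList_toList, MonoidAlgebra.coeff_smul, Finsupp.smul_apply,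
      MonoidAlgebra.coeff_single, Finsupp.single_eq_same, smul_eq_mul, mul_one]
    rfl
  · intro w hw hne
    have hlt : w < lmOf h := lt_of_le_of_ne (hmax w hw) hne
    have hlen : w.toList.length ≤ (lmOf h).toList.length := length_le_of_lt hlt
    rw [MonoidAlgebra.coeff_smul, Finsupp.smul_apply]
    cases h1 : red1 w.toList with
    | none =>
      rw [nuL_of_none h1, FreeMonoid.ofList_toList, MonoidAlgebra.coeff_single,
        Finsupp.single_eq_of_ne' hne, smul_zero]
    | some r =>
      cases h2 : red1 r with
      | none =>
        rw [nuL_some_none h1 h2, MonoidAlgebra.coeff_single, Finsupp.single_eq_of_ne', smul_zero]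
        intro hcon
        have hlr := red1_length h1
        have : (FreeMonoid.ofList r).toList = (lmOf h).toList := by rw [hcon]
        rw [FreeMonoid.toList_ofList] at this
        rw [this] at hlr
        omega
      | some r' => rw [nuL_some_some h1 h2, MonoidAlgebra.coeff_zero, Finsupp.coe_zero, Pi.zero_apply, smul_zero]
  · intro hns
    rw [Finsupp.notMem_support_iff.mp hns, zero_smul, MonoidAlgebra.coeff_zero, Finsupp.coe_zero, Pi.zero_apply]

/-! ### The hard inclusion: every leading term of `I` lies in `⟨LT(G)⟩` -/

lemma lt_mem_J {h : Rg} (hI : h ∈ TwoSidedIdeal.span {fp}) (h0 : h ≠ 0) :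
    ltOf h ∈ TwoSidedIdeal.span (ltSet {fp, gp}) := by
  set J := TwoSidedIdeal.span (ltSet {fp, gp}) with hJ
  obtain ⟨hmem, hmax⟩ := lm_spec h0
  have hlc : lcOf h ≠ 0 := Finsupp.mem_support_iff.mp hmem
  by_cases hc : [1,0,1] <:+: (lmOf h).toList
  · -- the leading monomial contains xyx
    obtain ⟨s, t, hst⟩ := hc
    have hp : lmOf h = FreeMonoid.ofList s * (xm * ym * xm) * FreeMonoid.ofList t := by
      apply FreeMonoid.toList.injective
      rw [← hst]
      simp [xm, ym]
    have hlt : ltOf h = MonoidAlgebra.single (FreeMonoid.ofList s) (3 * lcOf h)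
        * MonoidAlgebra.single (xm * ym * xm) 3 * MonoidAlgebra.single (FreeMonoid.ofList t) 1 := by
      rw [MonoidAlgebra.single_mul_single, MonoidAlgebra.single_mul_single, ltOf, hp,
        show (3 * lcOf h * 3 * 1 : ZMod 4) = lcOf h from by
          have : ∀ c : ZMod 4, 3 * c * 3 * 1 = c := by decide
          exact this _]
    have hf_mem : MonoidAlgebra.single (xm * ym * xm) (3 : ZMod 4) ∈ J := by
      have : ltOf fp ∈ ltSet {fp, gp} := ⟨fp, Set.mem_insert _ _, fp_ne, rfl⟩
      rw [lt_fp] at this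
      exact TwoSidedIdeal.subset_span this
    rw [hlt]
    exact J.mul_mem_right _ _ (J.mul_mem_left _ _ hf_mem)
  · -- the leading monomial does not contain xyx
    have hred : red1 (lmOf h).toList = none := red1_eq_none hc
    have hNM : NM h = 0 := NM_vanish (mem_Pmod_of_mem_span hI)
    have hS : NR h ∈ Smod := by
      have : Smod.mkQ (NR h) = 0 := hNM
      rwa [Submodule.mkQ_apply, Submodule.Quotient.mk_eq_zero] at this
    have hval : (NR h).coeff (lmOf h) = lcOf h := NR_apply_lm h0 hred
    obtain ⟨hinf, h2⟩ := mem_Tmod (Smod_le_Tmod hS) (lmOf h) (by rw [hval]; exact hlc)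
    rw [hval] at h2
    obtain ⟨s, t, hst⟩ := hinf
    have hp : lmOf h = FreeMonoid.ofList s * (xm * ym * ym * xm) * FreeMonoid.ofList t := by
      apply FreeMonoid.toList.injective
      rw [← hst]
      simp [xm, ym]
    have hlt : ltOf h = MonoidAlgebra.single (FreeMonoid.ofList s) 1
        * MonoidAlgebra.single (xm * ym * ym * xm) (-2)
        * MonoidAlgebra.single (FreeMonoid.ofList t) 1 := by
      rw [MonoidAlgebra.single_mul_single, MonoidAlgebra.single_mul_single, ltOf, hp, h2,
        show (1 * (-2) * 1 : ZMod 4) = 2 from by decide]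
    have hg_mem : (MonoidAlgebra.single (xm * ym * ym * xm) (-2 : ZMod 4) : Rg) ∈ J := by
      have : ltOf gp ∈ ltSet {fp, gp} := ⟨gp, Set.mem_insert_of_mem _ rfl, gp_ne, rfl⟩
      rw [lt_gp, gp] at this
      exact TwoSidedIdeal.subset_span this
    rw [hlt]
    exact J.mul_mem_right _ _ (J.mul_mem_left _ _ hg_mem)

/-! ### Part 1: `g ∈ I` -/

lemma gp_eq : gp = fp * MonoidAlgebra.single (ym * xm) 1
    - MonoidAlgebra.single (xm * ym) 1 * fp + fp * MonoidAlgebra.single ym 2 := by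
  simp only [fp, gp, sub_mul, mul_sub, MonoidAlgebra.single_mul_single, mul_assoc,
    one_mul, mul_one]
  rw [show ((2:ZMod 4) * 2) = 0 from by decide, MonoidAlgebra.single_zero,
    show ((3:ZMod 4) * 2) = 2 from by decide]
  rw [show (MonoidAlgebra.single (xm * (ym * (ym * xm))) (-2 : ZMod 4) : Rg)
      = - MonoidAlgebra.single (xm * (ym * (ym * xm))) 2 from MonoidAlgebra.single_neg _ _]
  have hD : (MonoidAlgebra.single (xm * (ym * (xm * ym))) (2:ZMod 4) : Rg)
      + MonoidAlgebra.single (xm * (ym * (xm * ym))) 2 = 0 := by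
    rw [← MonoidAlgebra.single_add, show ((2:ZMod 4) + 2) = 0 from by decide]
    exact MonoidAlgebra.single_zero _
  rw [show (MonoidAlgebra.single (xm * (ym * (xm * (ym * xm)))) (3:ZMod 4) : Rg)
        - MonoidAlgebra.single (xm * (ym * (ym * xm))) 2
        - (MonoidAlgebra.single (xm * (ym * (xm * (ym * xm)))) 3
          - MonoidAlgebra.single (xm * (ym * (xm * ym))) 2)
        + (MonoidAlgebra.single (xm * (ym * (xm * ym))) 2 - 0)
      = - MonoidAlgebra.single (xm * (ym * (ym * xm))) 2
        + (MonoidAlgebra.single (xm * (ym * (xm * ym))) 2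
          + MonoidAlgebra.single (xm * (ym * (xm * ym))) 2) from by abel]
  rw [hD, add_zero]

lemma part1 : gp ∈ TwoSidedIdeal.span {fp} := by
  set I := TwoSidedIdeal.span ({fp} : Set Rg) with hI
  have hf : fp ∈ I := TwoSidedIdeal.subset_span rfl
  rw [gp_eq]
  exact I.add_mem (I.sub_mem (I.mul_mem_right _ _ hf) (I.mul_mem_left _ _ hf))
    (I.mul_mem_right _ _ hf)

/-! ### Part 2: equality of the two leading-term ideals -/

lemma part2 : TwoSidedIdeal.span (ltSet {fp, gp})
    = TwoSidedIdeal.span (ltSet ((TwoSidedIdeal.span {fp} : TwoSidedIdeal Rg) : Set Rg)) := by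
  apply le_antisymm
  · apply TwoSidedIdeal.span_mono
    rintro t ⟨h, hmem, hne, rfl⟩
    rcases Set.mem_insert_iff.mp hmem with heq | heq
    · exact ⟨h, by rw [heq]; exact TwoSidedIdeal.subset_span rfl, hne, rfl⟩
    · exact ⟨h, by rw [Set.mem_singleton_iff.mp heq]; exact part1, hne, rfl⟩
  · intro z hz
    refine TwoSidedIdeal.mem_span_iff.mp hz _ ?_
    rintro t ⟨h, hmem, hne, rfl⟩
    exact SetLike.mem_coe.mpr (lt_mem_J (SetLike.mem_coe.mp hmem) hne)

end GBZmod4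

/-- In `R = (ℤ/4ℤ)⟨x,y⟩` with the left graded lexicographic order (`x > y`), the set
`G = {3xyx − 2xy, −2xy²x}` is a noncommutative Gröbner basis for the two-sided ideal
`I = ⟨3xyx − 2xy⟩`; in particular `−2xy²x ∈ I` and `⟨LT(G)⟩ = ⟨LT(I)⟩`.
Here `x = FreeMonoid.of 1` and `y = FreeMonoid.of 0` (so that `y < x`). -/
theorem example_groebner_basis_zmod4 :
    letI x : Mon 2 := FreeMonoid.of 1
    letI y : Mon 2 := FreeMonoid.of 0
    letI f : MonoidAlgebra (ZMod 4) (Mon 2) :=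
      MonoidAlgebra.single (x * y * x) 3 - MonoidAlgebra.single (x * y) 2
    letI g : MonoidAlgebra (ZMod 4) (Mon 2) :=
      MonoidAlgebra.single (x * y * y * x) (-2)
    letI I : TwoSidedIdeal (MonoidAlgebra (ZMod 4) (Mon 2)) := TwoSidedIdeal.span {f}
    g ∈ I ∧
      TwoSidedIdeal.span (ltSet {f, g}) =
        TwoSidedIdeal.span (ltSet (I : Set (MonoidAlgebra (ZMod 4) (Mon 2)))) :=
  ⟨GBZmod4.part1, GBZmod4.part2⟩
end

section
/- Let V_1,...,V_k be commutative rings such that each ideal J_i ⊆ R_i = V_i⟨x_1,...,x_m⟩ has a Gröbner basis G_i solving the ideal membership problem (f_i ∈ ⟨G_i⟩ iff the remainder of f_i by G_i is 0). Let ψ : A → ∏_j V_j be a ring isomorphism, extended to ψ : A⟨x_1,...,x_m⟩ → (∏_j V_j)⟨x_1,...,x_m⟩, and let I be an ideal of A⟨x_1,...,x_m⟩ with π_i(ψ(I)) = ⟨G_i⟩ for each i. Then for f ∈ A⟨x_1,...,x_m⟩: f ∈ I if and only if for every 1 ≤ i ≤ k, the remainder of π_i(ψ(f)) upon division by G_i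 is 0. -/
open MonoidAlgebra

variable {m : ℕ} {V : Type} [CommRing V] [LinearOrder (Mon m)]

/-- Extension of a ring homomorphism on coefficients to monoid algebras. -/
noncomputable def mapCoeff {k k' : Type} [CommRing k] [CommRing k'] {G : Type} [Monoid G]
    (φ : k →+* k') : MonoidAlgebra k G →+* MonoidAlgebra k' G :=
  MonoidAlgebra.liftNCRingHom ((MonoidAlgebra.singleOneRingHom).comp φ)
    (MonoidAlgebra.of k' G)
    (by
      intro x y
      show MonoidAlgebra.single (1 : G) (φ x) * MonoidAlgebra.single y 1 =
        MonoidAlgebra.single y 1 * MonoidAlgebra.single (1 : G) (φ x)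
      rw [MonoidAlgebra.single_mul_single, MonoidAlgebra.single_mul_single]
      simp)

lemma mapCoeff_single' {k k' : Type} [CommRing k] [CommRing k'] {G : Type} [Monoid G]
    (φ : k →+* k') (x : G) (a : k) :
    mapCoeff φ (MonoidAlgebra.single x a) = MonoidAlgebra.single x (φ a) := by
  show MonoidAlgebra.liftNC _ _ _ = _
  rw [MonoidAlgebra.liftNC_single]
  show MonoidAlgebra.single 1 (φ a) * MonoidAlgebra.single x 1 = _
  rw [MonoidAlgebra.single_mul_single]; simp

lemma mapCoeff_apply' {k k' : Type} [CommRing k] [CommRing k'] {G : Type} [Monoid G]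
    (φ : k →+* k') (f : MonoidAlgebra k G) (x : G) :
    (mapCoeff φ f).coeff x = φ (f.coeff x) := by
  induction f using MonoidAlgebra.induction_linear with
  | zero => simp
  | add f g hf hg => rw [map_add, MonoidAlgebra.coeff_add, Finsupp.add_apply, hf, hg, MonoidAlgebra.coeff_add, Finsupp.add_apply, map_add]
  | single p a =>
      rw [mapCoeff_single']
      classical
      simp [MonoidAlgebra.single_apply, Finsupp.single_apply]
      split <;> simp

/-- ψ-dynamical noncommutative Gröbner bases.  Let `ψ : A ≃ ∏_i V_i` be a ring
isomorphism, extended coefficientwise to `Ψ : A⟨x_1,…,x_m⟩ → (∏_i V_i)⟨x_1,…,x_m⟩`, and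
`π_i` the coefficientwise projections.  Suppose each `G_i ⊆ V_i⟨x_1,…,x_m⟩` solves the
ideal membership problem for `⟨G_i⟩` via division remainders, and `I` is an ideal of
`A⟨x_1,…,x_m⟩` with `π_i(ψ(I)) = ⟨G_i⟩` for each `i`.  Then `f ∈ I` iff for every `i`
the remainder of `π_i(ψ(f))` upon division by `G_i` is `0`. -/
theorem psi_dynamical_groebner {k m : ℕ} (V : Fin k → Type) [∀ i, CommRing (V i)]
    {A : Type} [CommRing A] [LinearOrder (Mon m)] (hadm : AdmissibleOrder m)
    (G : ∀ i : Fin k, Set (MonoidAlgebra (V i) (Mon m)))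
    (hGmem : ∀ i : Fin k, ∀ h : MonoidAlgebra (V i) (Mon m),
      h ∈ TwoSidedIdeal.span (G i) ↔ IsRemainder (G i) h 0)
    (ψ : A ≃+* (∀ i, V i))
    (I : TwoSidedIdeal (MonoidAlgebra A (Mon m)))
    (hI : ∀ i : Fin k,
      mapCoeff ((Pi.evalRingHom V i).comp ψ.toRingHom) ''
          (I : Set (MonoidAlgebra A (Mon m))) =
        (TwoSidedIdeal.span (G i) : Set (MonoidAlgebra (V i) (Mon m))))
    (f : MonoidAlgebra A (Mon m)) :
    f ∈ I ↔ ∀ i : Fin k,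
      IsRemainder (G i) (mapCoeff ((Pi.evalRingHom V i).comp ψ.toRingHom) f) 0 := by
  constructor
  · intro hf i
    rw [← hGmem]
    rw [← SetLike.mem_coe, ← hI i]
    exact ⟨f, hf, rfl⟩
  · intro h
    have hmem : ∀ i, ∃ g, g ∈ I ∧
        mapCoeff ((Pi.evalRingHom V i).comp ψ.toRingHom) g =
          mapCoeff ((Pi.evalRingHom V i).comp ψ.toRingHom) f := by
      intro i
      have : mapCoeff ((Pi.evalRingHom V i).comp ψ.toRingHom) f ∈
          (TwoSidedIdeal.span (G i) : Set (MonoidAlgebra (V i) (Mon m))) := by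
        rw [SetLike.mem_coe, hGmem]; exact h i
      rw [← hI i] at this
      obtain ⟨g, hg, hge⟩ := this
      exact ⟨g, hg, hge⟩
    choose g hgI hge using hmem
    set a : Fin k → A := fun i => ψ.symm (Pi.single i 1) with ha
    set F : MonoidAlgebra A (Mon m) :=
      ∑ i, MonoidAlgebra.single (1 : Mon m) (a i) * g i with hF
    have hFI : F ∈ I :=
      I.finsetSum_mem _ _ fun i _ => I.mul_mem_left _ _ (hgI i)
    have key : ∀ j, mapCoeff ((Pi.evalRingHom V j).comp ψ.toRingHom) F =
        mapCoeff ((Pi.evalRingHom V j).comp ψ.toRingHom) f := by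
      intro j
      rw [hF, map_sum, Finset.sum_eq_single j]
      · rw [map_mul, mapCoeff_single', hge j]
        have h1 : ((Pi.evalRingHom V j).comp ψ.toRingHom) (a j) = 1 := by
          simp [ha]
        rw [h1, ← MonoidAlgebra.one_def, one_mul]
      · intro i _ hij
        rw [map_mul, mapCoeff_single']
        have h0 : ((Pi.evalRingHom V j).comp ψ.toRingHom) (a i) = 0 := by
          simp [ha, Pi.single_apply, hij]
        rw [h0]
        simp
      · intro hj; exact absurd (Finset.mem_univ j) hj
    have hfF : f = F := by
      ext x
      apply ψ.injective
      funext j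
      have := congrArg (fun p => p.coeff x) (key j)
      simpa [mapCoeff_apply'] using this.symm
    rw [hfF]; exact hFI
end
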